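/- Let G be a finite group whose power graph 𝒢(G) is non-complete and minimally edge-connected. If G has a maximal subgroup of order two, then every non-identity element of G has order two, i.e., G is an elementary abelian 2-group of rank at least 2. -/

import Mathlib

open Subgroup

/-- The power graph of a group: distinct `u`, `v` are adjacent iff one is a
positive integer power of the other. -/
def powerGraph (G : Type*) [Group G] : SimpleGraph G where
  Adj u v := u ≠ v ∧ ((∃ n : ℕ, 0 < n ∧ v = u ^ n) ∨ (∃ m : ℕ, 0 < m ∧ u = v ^ m))
  symm := ⟨fun u v h => ⟨h.1.symm, h.2.symm⟩⟩
  loopless := ⟨fun u h => h.1 rfl⟩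

/-- The degree of a vertex in a graph. -/
noncomputable def gDegree {V : Type*} (Γ : SimpleGraph V) (x : V) : ℕ :=
  (Γ.neighborSet x).ncard

/-- The minimum degree δ(Γ) of a graph. -/
noncomputable def gMinDegree {V : Type*} (Γ : SimpleGraph V) : ℕ :=
  sInf (Set.range (gDegree Γ))

/-- The edge-connectivity κ'(Γ): the least size of a set of edges whose deletion
disconnects the graph. -/
noncomputable def edgeConn {V : Type*} (Γ : SimpleGraph V) : ℕ :=
  sInf {k | ∃ s : Finset (Sym2 V), s.card = k ∧ ↑s ⊆ Γ.edgeSet ∧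
    ¬ (Γ.deleteEdges ↑s).Connected}

/-- The vertex connectivity κ(Γ): the least size of a set of vertices whose deletion
disconnects the graph or leaves at most one vertex. -/
noncomputable def vertConn {V : Type*} (Γ : SimpleGraph V) : ℕ :=
  sInf {k | ∃ S : Set V, S.Finite ∧ S.ncard = k ∧
    (¬ (Γ.induce Sᶜ).Preconnected ∨ Sᶜ.Subsingleton)}

/-- A nontrivial connected graph is minimally edge-connected if deleting any edge
drops the edge-connectivity by exactly one. -/
def MinimallyEdgeConnected {V : Type*} (Γ : SimpleGraph V) : Prop :=
  Nontrivial V ∧ Γ.Connected ∧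
    ∀ e ∈ Γ.edgeSet, edgeConn (Γ.deleteEdges {e}) = edgeConn Γ - 1

/-- A nontrivial connected graph is minimally connected if deleting any edge
drops the vertex connectivity by exactly one. -/
def MinimallyConnected {V : Type*} (Γ : SimpleGraph V) : Prop :=
  Nontrivial V ∧ Γ.Connected ∧
    ∀ e ∈ Γ.edgeSet, vertConn (Γ.deleteEdges {e}) = vertConn Γ - 1

/-- `S` is a separating set of `Γ` if deleting the vertices of `S` leaves a
disconnected graph. -/
def IsSeparatingSet {V : Type*} (Γ : SimpleGraph V) (S : Set V) : Prop :=
  ¬ (Γ.induce Sᶜ).Preconnected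

/-- `S` is a minimum separating set of `Γ`. -/
def IsMinSeparatingSet {V : Type*} (Γ : SimpleGraph V) (S : Set V) : Prop :=
  IsSeparatingSet Γ S ∧ ∀ T : Set V, IsSeparatingSet Γ T → S.ncard ≤ T.ncard

/-- `y` generates a maximal cyclic subgroup of `G`: the cyclic subgroup `⟨y⟩` is
not properly contained in any cyclic subgroup. -/
def IsMaxCyclicGen {G : Type*} [Group G] (y : G) : Prop :=
  ∀ z : G, zpowers y ≤ zpowers z → zpowers y = zpowers z

/-- A subgroup is maximal cyclic if it is cyclic and not properly contained in
any cyclic subgroup. -/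
def IsMaximalCyclicSubgroup {G : Type*} [Group G] (H : Subgroup G) : Prop :=
  (∃ y : G, H = zpowers y) ∧ ∀ z : G, H ≤ zpowers z → H = zpowers z

/-! For an edge `ab` of a minimally edge-connected graph `Γ`, a minimum cut of `Γ - ab`
together with `ab` is a cut of size at most `κ'(Γ)` separating `a` from `b`. If every neighbour `u` of a
vertex `t` were adjacent to both `a` and `b`, this cut would contain `ua` or `ub` for each such
`u`, whence `κ'(Γ) > deg t ≥ κ'(Γ)`. In the power graph, when `⟨t⟩` is a maximal subgroup of
order two, the neighbours of `t` are `1` and the generators of `G`, all adjacent to `x` and `x²`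
whenever `⟨x⟩` is proper; so every `x` generating a proper subgroup satisfies `x² = 1`. The two
ends of a non-edge are such elements, distinct and different from `1`; a cyclic group has only
one involution, so `G` is not cyclic and every element squares to one. -/

open SimpleGraph

namespace SimpleGraph

variable {V : Type*} {Γ : SimpleGraph V}

lemma edgeConn_le_card {s : Finset (Sym2 V)} (hs : ↑s ⊆ Γ.edgeSet)
    (hs' : ¬ (Γ.deleteEdges ↑s).Connected) : edgeConn Γ ≤ s.card :=
  Nat.sInf_le ⟨s, rfl, hs, hs'⟩

lemma not_connected_deleteEdges_incidenceSet [Nontrivial V] (v : V) :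
    ¬ (Γ.deleteEdges (Γ.incidenceSet v)).Connected := fun h => by
  obtain ⟨u, hu⟩ := h.preconnected.exists_adj_of_nontrivial v
  rw [deleteEdges_adj] at hu
  exact hu.2 ⟨Γ.mem_edgeSet.2 hu.1, Sym2.mem_mk_left v u⟩

variable [Finite V] [Nontrivial V]

lemma exists_disconnecting_finset_card_eq_gDegree (v : V) :
    ∃ s : Finset (Sym2 V), s.card = gDegree Γ v ∧ ↑s ⊆ Γ.edgeSet ∧
      ¬ (Γ.deleteEdges ↑s).Connected := by
  classical
  have hfin := (Γ.incidenceSet v).toFinite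
  refine ⟨hfin.toFinset, ?_, by simpa using Γ.incidenceSet_subset v,
    by simpa using not_connected_deleteEdges_incidenceSet v⟩
  rw [← Set.ncard_eq_toFinset_card _ hfin, gDegree]
  exact Set.ncard_congr' (Γ.incidenceSetEquivNeighborSet v)

lemma edgeConn_le_gDegree (v : V) : edgeConn Γ ≤ gDegree Γ v := by
  obtain ⟨s, hcard, hs, hs'⟩ := exists_disconnecting_finset_card_eq_gDegree (Γ := Γ) v
  exact hcard ▸ edgeConn_le_card hs hs'

lemma exists_disconnecting_finset_card_eq_edgeConn (Γ : SimpleGraph V) :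
    ∃ s : Finset (Sym2 V), s.card = edgeConn Γ ∧ ↑s ⊆ Γ.edgeSet ∧
      ¬ (Γ.deleteEdges ↑s).Connected := by
  obtain ⟨s, -, hs⟩ :=
    exists_disconnecting_finset_card_eq_gDegree (Γ := Γ) (Classical.arbitrary V)
  exact Nat.sInf_mem (s := {k | ∃ s : Finset (Sym2 V), s.card = k ∧ ↑s ⊆ Γ.edgeSet ∧
    ¬ (Γ.deleteEdges ↑s).Connected}) ⟨s.card, s, rfl, hs⟩

lemma Connected.edgeConn_pos (h : Γ.Connected) : 0 < edgeConn Γ := by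
  obtain ⟨s, hcard, -, hs⟩ := exists_disconnecting_finset_card_eq_edgeConn Γ
  refine Nat.pos_of_ne_zero fun h0 => hs ?_
  rwa [Finset.card_eq_zero.1 (hcard.trans h0), Finset.coe_empty, deleteEdges_empty]

end SimpleGraph

namespace MinimallyEdgeConnected

variable {V : Type*} [Finite V] {Γ : SimpleGraph V}

lemma exists_isBridge_deleteEdges (hΓ : MinimallyEdgeConnected Γ) {a b : V} (hab : Γ.Adj a b) :
    ∃ s : Finset (Sym2 V), s.card < edgeConn Γ ∧ (Γ.deleteEdges ↑s).IsBridge s(a, b) := by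
  obtain ⟨_, hconn, hdel⟩ := hΓ
  obtain ⟨s, hcard, hs, hs'⟩ :=
    exists_disconnecting_finset_card_eq_edgeConn (Γ.deleteEdges {s(a, b)})
  rw [hdel _ hab] at hcard
  have hpos := hconn.edgeConn_pos
  refine ⟨s, by omega, fun hr => hs' ?_⟩
  have hconn' : (Γ.deleteEdges ↑s).Connected := by
    by_contra h
    have := edgeConn_le_card (hs.trans (edgeSet_mono (deleteEdges_le _))) h
    omega
  rw [deleteEdges_deleteEdges, Set.union_comm, ← deleteEdges_deleteEdges]
  exact hconn'.connected_delete_edge_of_not_isBridge fun hb => hb hr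

theorem not_neighborSet_subset_commonNeighbors (hΓ : MinimallyEdgeConnected Γ) {a b : V}
    (hab : Γ.Adj a b) (t : V) : ¬ Γ.neighborSet t ⊆ Γ.commonNeighbors a b := by
  classical
  intro hN
  have := hΓ.1
  obtain ⟨s, hs, hbridge⟩ := hΓ.exists_isBridge_deleteEdges hab
  have hcut : ∀ u ∈ Γ.neighborSet t, s(u, a) ∈ s ∨ s(u, b) ∈ s := by
    intro u hu
    obtain ⟨hau, hbu⟩ := (Γ.mem_commonNeighbors).1 (hN hu)
    by_contra! h
    refine isBridge_iff.1 hbridge ((Adj.reachable (v := u) ?_).trans (Adj.reachable ?_))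
    · simp only [deleteEdges_adj, Set.mem_singleton_iff, Sym2.congr_right, Finset.mem_coe]
      exact ⟨⟨hau, by rw [Sym2.eq_swap]; exact h.1⟩, hbu.ne'⟩
    · simp only [deleteEdges_adj, Set.mem_singleton_iff, Sym2.congr_left, Finset.mem_coe]
      exact ⟨⟨hbu.symm, h.2⟩, hau.ne'⟩
  let f : V → Sym2 V := fun u => if s(u, a) ∈ s then s(u, a) else s(u, b)
  have hmaps : ∀ u ∈ Γ.neighborSet t, f u ∈ (s : Set (Sym2 V)) := by
    intro u hu
    simp only [f, Finset.mem_coe]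
    split_ifs with h
    exacts [h, (hcut u hu).resolve_left h]
  have hinj : Set.InjOn f (Γ.neighborSet t) := by
    intro u hu u' _ hf
    obtain ⟨hau, hbu⟩ := (Γ.mem_commonNeighbors).1 (hN hu)
    have hmem : u ∈ f u' := hf ▸ by unfold f; split_ifs <;> exact Sym2.mem_mk_left _ _
    unfold f at hmem
    split_ifs at hmem <;> rcases Sym2.mem_iff.1 hmem with h | h
    all_goals first | exact h | exact absurd h hau.ne' | exact absurd h hbu.ne'
  have hdeg := Set.ncard_le_ncard_of_injOn f hmaps hinj
  rw [Set.ncard_coe_finset] at hdeg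
  have := edgeConn_le_gDegree (Γ := Γ) t
  unfold gDegree at this
  omega

end MinimallyEdgeConnected

section PowerGraph

variable {G : Type*} [Group G]

lemma powerGraph_adj_of_mem_zpowers [Finite G] {u x : G} (hne : u ≠ x) (hx : x ∈ zpowers u) :
    (powerGraph G).Adj u x := by
  obtain ⟨k, hk⟩ := mem_powers_iff_mem_zpowers.2 hx
  refine ⟨hne, Or.inl ⟨k + orderOf u, by have := orderOf_pos u; omega, ?_⟩⟩
  rw [pow_add, pow_orderOf_eq_one, mul_one, ← hk]

lemma mem_zpowers_or_mem_zpowers_of_powerGraph_adj {u v : G} (h : (powerGraph G).Adj u v) :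
    v ∈ zpowers u ∨ u ∈ zpowers v :=
  h.2.imp (fun ⟨n, _, hn⟩ => hn ▸ npow_mem_zpowers u n)
    fun ⟨m, _, hm⟩ => hm ▸ npow_mem_zpowers v m

lemma eq_one_of_mem_zpowers_of_orderOf_eq_two {t u : G} (ht : orderOf t = 2)
    (hu : u ∈ zpowers t) (hne : u ≠ t) : u = 1 := by
  obtain ⟨k, rfl⟩ := mem_zpowers_iff.1 hu
  clear hu
  rw [← zpow_mod_orderOf, ht, Nat.cast_ofNat] at hne ⊢
  rcases Int.emod_two_eq_zero_or_one k with h | h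
  · rw [h, zpow_zero]
  · exact absurd (by rw [h, zpow_one]) hne

lemma eq_one_or_zpowers_eq_top_of_powerGraph_adj {t u : G} (ht : orderOf t = 2)
    (hco : IsCoatom (zpowers t)) (h : (powerGraph G).Adj t u) : u = 1 ∨ zpowers u = ⊤ := by
  have hmem : u ∈ zpowers t ∨ zpowers u = ⊤ := by
    refine (mem_zpowers_or_mem_zpowers_of_powerGraph_adj h).elim Or.inl fun htu => ?_
    rcases (zpowers_le.2 htu).eq_or_lt with heq | hlt
    · exact Or.inl (heq ▸ mem_zpowers u)
    · exact Or.inr (hco.2 _ hlt)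
  exact hmem.imp_left fun hu => eq_one_of_mem_zpowers_of_orderOf_eq_two ht hu h.1.symm

lemma sq_eq_one_of_zpowers_ne_top [Finite G] (hmin : MinimallyEdgeConnected (powerGraph G))
    {t : G} (ht : orderOf t = 2) (hco : IsCoatom (zpowers t)) {x : G} (hx : zpowers x ≠ ⊤) :
    x ^ 2 = 1 := by
  by_contra hx2
  have hx1 : x ≠ 1 := by rintro rfl; exact hx2 (one_pow 2)
  have hsq : zpowers (x ^ 2) ≠ ⊤ := fun h =>
    hx (top_le_iff.1 (h ▸ zpowers_le.2 (npow_mem_zpowers x 2)))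
  have hne : x ≠ x ^ 2 := by rwa [pow_two, Ne, left_eq_mul]
  refine hmin.not_neighborSet_subset_commonNeighbors
    (powerGraph_adj_of_mem_zpowers hne (npow_mem_zpowers x 2)) t fun u hu => ?_
  have hadj : ∀ y : G, y ≠ 1 → zpowers y ≠ ⊤ → (powerGraph G).Adj y u := by
    intro y hy1 hy
    rcases eq_one_or_zpowers_eq_top_of_powerGraph_adj ht hco hu with rfl | hu
    · exact powerGraph_adj_of_mem_zpowers hy1 (one_mem _)
    · exact (powerGraph_adj_of_mem_zpowers (fun h => hy (by rwa [← h])) (hu ▸ mem_top y)).symm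
  exact (powerGraph G).mem_commonNeighbors.2 ⟨hadj x hx1 hx, hadj _ hx2 hsq⟩

end PowerGraph

lemma IsCyclic.eq_of_sq_eq_one {G : Type*} [Group G] [Finite G] [IsCyclic G] {u v : G}
    (hu1 : u ≠ 1) (hv1 : v ≠ 1) (hu : u ^ 2 = 1) (hv : v ^ 2 = 1) : u = v := by
  classical
  have := Fintype.ofFinite G
  by_contra huv
  have hsub : ({1, u, v} : Finset G) ⊆ ({a : G | a ^ 2 = 1} : Finset G) := by
    intro a ha
    simp only [Finset.mem_insert, Finset.mem_singleton] at ha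
    rcases ha with rfl | rfl | rfl <;> simp [*]
  have := (Finset.card_le_card hsub).trans (IsCyclic.card_pow_eq_one_le two_pos)
  rw [Finset.card_eq_three.2 ⟨1, u, v, hu1.symm, hv1.symm, huv, rfl⟩] at this
  omega

lemma Subgroup.exists_orderOf_eq_two_zpowers_eq {G : Type*} [Group G] [Finite G] {H : Subgroup G}
    (hH : Nat.card H = 2) : ∃ t : G, orderOf t = 2 ∧ zpowers t = H := by
  obtain ⟨t, ht⟩ := exists_prime_orderOf_dvd_card' (G := H) 2 hH.symm.dvd
  refine ⟨t, (orderOf_coe t).trans ht, eq_of_le_of_card_ge (zpowers_le.2 t.2) ?_⟩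
  rw [Nat.card_zpowers, orderOf_coe, ht, hH]

/-- If the power graph of a finite group is non-complete and minimally edge-connected
and the group has a maximal subgroup of order two, then every non-identity element has
order two, i.e. `G` is an elementary abelian 2-group of rank at least 2. -/
theorem stmt_12 (G : Type*) [Group G] [Fintype G]
    (hnc : powerGraph G ≠ ⊤) (hmin : MinimallyEdgeConnected (powerGraph G))
    (hmax : ∃ H : Subgroup G, Nat.card H = 2 ∧ IsCoatom H) :
    (∀ x : G, x ≠ 1 → orderOf x = 2) ∧ 4 ≤ Fintype.card G := by
  obtain ⟨H, hH, hco⟩ := hmax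
  obtain ⟨t, ht, rfl⟩ := exists_orderOf_eq_two_zpowers_eq hH
  have hsq {x : G} : zpowers x ≠ ⊤ → x ^ 2 = 1 := sq_eq_one_of_zpowers_ne_top hmin ht hco
  obtain ⟨u, v, huv, hadj⟩ := ne_top_iff_exists_not_adj.1 hnc
  have hvu : v ∉ zpowers u := fun h => hadj (powerGraph_adj_of_mem_zpowers huv h)
  have huv' : u ∉ zpowers v := fun h => hadj (powerGraph_adj_of_mem_zpowers huv.symm h).symm
  have hu1 : u ≠ 1 := fun h => huv' (h ▸ one_mem _)
  have hv1 : v ≠ 1 := fun h => hvu (h ▸ one_mem _)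
  have hu2 := hsq fun h => hvu (h ▸ mem_top v)
  have hv2 := hsq fun h => huv' (h ▸ mem_top u)
  have hncyc : ¬ IsCyclic G := fun _ => huv (IsCyclic.eq_of_sq_eq_one hu1 hv1 hu2 hv2)
  have hall (x : G) : x ^ 2 = 1 :=
    hsq fun h => hncyc (isCyclic_iff_exists_zpowers_eq_top.2 ⟨x, h⟩)
  refine ⟨fun x hx => orderOf_eq_prime (hall x) hx, ?_⟩
  have h3 : 2 < Fintype.card G := Fintype.two_lt_card_iff.2 ⟨1, u, v, hu1.symm, hv1.symm, huv⟩
  have h2 : 2 ∣ Fintype.card G := ht ▸ orderOf_dvd_card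
  omega
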